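/- If the structure constants f satisfy the Jacobi identity, then for every a and every μ the anomaly 𝒜(C_a^μ,T) := f_{abc}( − v_{bν} C_c^{μν} + u_b C_c^μ + F_b^{μν} B_{cν} − (d^μ ũ_b) B_c ) vanishes in the jet algebra 𝒜 (sum over b,c and ν). -/

import Mathlib

/-!
Since `η` is diagonal, raising and lowering indices cancel, and since `v` (hence `F`) is central
while `u`, `ũ` anticommute, every term of the anomaly becomes `f_{abc} f_{cde}` times one of the
monomials `u_x v_{yν} F_z^{μν}` or `u_x u_y (d_μ ũ_z)`. Summing over `c` leaves the coefficients
`K_{xyz} = f_{axc} f_{cyz}`. After relabelling, the first monomial carries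
`K_{yxz} - K_{xyz} - K_{zxy}`, which is the Jacobi identity; the second carries a coefficient that
the Jacobi identity makes symmetric in `x, y`, against a monomial antisymmetric in `x, y`.
-/

open scoped TensorProduct

noncomputable section

/-- Lorentz indices. -/
abbrev Idx : Type := Fin 4

/-- The Minkowski metric `η = diag(1,-1,-1,-1)`, as complex scalars. -/
def η (μ ν : Idx) : ℂ := if μ = ν then (if μ = 0 then 1 else -1) else 0

/-- Even generators `v_{aμ;M}` of the jet algebra. -/
structure EvenGen (r : ℕ) : Type where
  a : Fin r
  μ : Idx
  M : Multiset Idx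
deriving DecidableEq

/-- Odd generators of the jet algebra: `u_{a;M}` (`tilde = false`) and `ũ_{a;M}`
(`tilde = true`). -/
structure OddGen (r : ℕ) : Type where
  tilde : Bool
  a : Fin r
  M : Multiset Idx
deriving DecidableEq

/-- The jet algebra `𝒜` of pure Yang-Mills: the free ℤ₂-graded-commutative unital
ℂ-algebra on the even generators `v_{aμ;M}` and the odd generators `u_{a;M}`, `ũ_{a;M}`,
realized concretely as the tensor product of the commutative polynomial algebra on the
even generators with the exterior algebra of the free ℂ-module on the odd generators. -/
abbrev Jet (r : ℕ) : Type :=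
  MvPolynomial (EvenGen r) ℂ ⊗[ℂ] ExteriorAlgebra ℂ (OddGen r →₀ ℂ)

variable {r : ℕ}

/-- The generator `v_{aμ;M}` as an element of `𝒜`. -/
def vGen (a : Fin r) (μ : Idx) (M : Multiset Idx) : Jet r :=
  MvPolynomial.X ⟨a, μ, M⟩ ⊗ₜ[ℂ] 1

/-- The generator `u_{a;M}` as an element of `𝒜`. -/
def uGen (a : Fin r) (M : Multiset Idx) : Jet r :=
  1 ⊗ₜ[ℂ] ExteriorAlgebra.ι ℂ (Finsupp.single ⟨false, a, M⟩ (1 : ℂ))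

/-- The generator `ũ_{a;M}` as an element of `𝒜`. -/
def utGen (a : Fin r) (M : Multiset Idx) : Jet r :=
  1 ⊗ₜ[ℂ] ExteriorAlgebra.ι ℂ (Finsupp.single ⟨true, a, M⟩ (1 : ℂ))

/-- Data of the formal derivatives `d_ν`, the grading (parity) automorphism `σ`
(which is `+1` on even elements and `-1` on odd elements, so that the graded Leibniz
rule for the odd derivation `d_Q` can be written as `d_Q(xy) = (d_Q x) y + σ(x) d_Q y`),
and the gauge variation `d_Q`, together with their defining properties.
Since `𝒜` is generated by the generators, these properties determine `d_ν`, `σ`, `d_Q`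
uniquely. -/
structure DerData (r : ℕ) where
  /-- the formal derivative `d_ν` -/
  d : Idx → Jet r →ₗ[ℂ] Jet r
  /-- the parity automorphism -/
  σ : Jet r →ₐ[ℂ] Jet r
  /-- the gauge variation `d_Q` -/
  dQ : Jet r →ₗ[ℂ] Jet r
  d_mul : ∀ (ν : Idx) (x y : Jet r), d ν (x * y) = d ν x * y + x * d ν y
  d_v : ∀ (ν : Idx) (a : Fin r) (μ : Idx) (M : Multiset Idx),
    d ν (vGen a μ M) = vGen a μ (ν ::ₘ M)
  d_u : ∀ (ν : Idx) (a : Fin r) (M : Multiset Idx), d ν (uGen a M) = uGen a (ν ::ₘ M)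
  d_ut : ∀ (ν : Idx) (a : Fin r) (M : Multiset Idx), d ν (utGen a M) = utGen a (ν ::ₘ M)
  σ_v : ∀ (a : Fin r) (μ : Idx) (M : Multiset Idx), σ (vGen a μ M) = vGen a μ M
  σ_u : ∀ (a : Fin r) (M : Multiset Idx), σ (uGen a M) = - uGen a M
  σ_ut : ∀ (a : Fin r) (M : Multiset Idx), σ (utGen a M) = - utGen a M
  dQ_mul : ∀ x y : Jet r, dQ (x * y) = dQ x * y + σ x * dQ y
  dQ_v : ∀ (a : Fin r) (μ : Idx) (M : Multiset Idx),
    dQ (vGen a μ M) = Complex.I • uGen a (μ ::ₘ M)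
  dQ_u : ∀ (a : Fin r) (M : Multiset Idx), dQ (uGen a M) = 0
  dQ_ut : ∀ (a : Fin r) (M : Multiset Idx),
    dQ (utGen a M) = (-Complex.I) • ∑ ρ : Idx, ∑ s : Idx, η ρ s • vGen a ρ (s ::ₘ M)

/-- The wave-equation elements `η^{ρσ} ξ_{;M+{ρ,σ}}`, for `ξ` any generator. -/
def IsWave (w : Jet r) : Prop :=
  (∃ (a : Fin r) (μ : Idx) (M : Multiset Idx),
      w = ∑ ρ : Idx, ∑ s : Idx, η ρ s • vGen a μ (ρ ::ₘ s ::ₘ M)) ∨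
  (∃ (a : Fin r) (M : Multiset Idx),
      w = ∑ ρ : Idx, ∑ s : Idx, η ρ s • uGen a (ρ ::ₘ s ::ₘ M)) ∨
  (∃ (a : Fin r) (M : Multiset Idx),
      w = ∑ ρ : Idx, ∑ s : Idx, η ρ s • utGen a (ρ ::ₘ s ::ₘ M))

/-- The equations-of-motion ideal `I`: the two-sided ideal of `𝒜` generated by the
wave-equation elements (as a ℂ-subspace, the span of all `p * w * q` with `w` a
wave-equation element). -/
def eom (r : ℕ) : Submodule ℂ (Jet r) :=
  Submodule.span ℂ {x : Jet r | ∃ w p q : Jet r, IsWave w ∧ x = p * w * q}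

/-- The raised formal derivative `d^μ = η^{μν} d_ν`. -/
def dUp (D : DerData r) (μ : Idx) (x : Jet r) : Jet r := ∑ ν : Idx, η μ ν • D.d ν x

/-- `v_a^μ := η^{μν} v_{aν}`. -/
def vUp (a : Fin r) (μ : Idx) : Jet r := ∑ ν : Idx, η μ ν • vGen a ν 0

/-- The field strength `F_a^{μν} := d^μ v_a^ν - d^ν v_a^μ`. -/
def Fuu (D : DerData r) (a : Fin r) (μ ν : Idx) : Jet r :=
  dUp D μ (vUp a ν) - dUp D ν (vUp a μ)

/-- The lowered field strength `F_{aμν} := η_{μρ} η_{νσ} F_a^{ρσ}`. -/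
def Fdd (D : DerData r) (a : Fin r) (μ ν : Idx) : Jet r :=
  ∑ ρ : Idx, ∑ s : Idx, (η μ ρ * η ν s) • Fuu D a ρ s

variable (D : DerData r) (f : Fin r → Fin r → Fin r → ℝ)

/-- The Yang-Mills interaction Lagrangian
`T := f_{abc}(½ v_{aμ} v_{bν} F_c^{νμ} + u_a v_b^μ (d_μ ũ_c))`. -/
def Tint : Jet r :=
  ∑ a : Fin r, ∑ b : Fin r, ∑ c : Fin r, ((f a b c : ℝ) : ℂ) •
    ((2⁻¹ : ℂ) • ∑ μ : Idx, ∑ ν : Idx, vGen a μ 0 * vGen b ν 0 * Fuu D c ν μ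
      + ∑ μ : Idx, uGen a 0 * vUp b μ * D.d μ (utGen c 0))

/-- `T^μ := f_{abc}(u_a v_{bν} F_c^{νμ} - ½ u_a u_b (d^μ ũ_c))`. -/
def Tup (μ : Idx) : Jet r :=
  ∑ a : Fin r, ∑ b : Fin r, ∑ c : Fin r, ((f a b c : ℝ) : ℂ) •
    (∑ ν : Idx, uGen a 0 * vGen b ν 0 * Fuu D c ν μ
      - (2⁻¹ : ℂ) • (uGen a 0 * uGen b 0 * dUp D μ (utGen c 0)))

/-- `T^{μν} := ½ f_{abc} u_a u_b F_c^{μν}`. -/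
def Tupup (μ ν : Idx) : Jet r :=
  (2⁻¹ : ℂ) • ∑ a : Fin r, ∑ b : Fin r, ∑ c : Fin r, ((f a b c : ℝ) : ℂ) •
    (uGen a 0 * uGen b 0 * Fuu D c μ ν)

/-- The Wick submonomial `B_{aμ} := -f_{abc} u_b v_{cμ}`. -/
def Bdn (a : Fin r) (μ : Idx) : Jet r :=
  ∑ b : Fin r, ∑ c : Fin r, (-((f a b c : ℝ) : ℂ)) • (uGen b 0 * vGen c μ 0)

/-- `B_a^μ := η^{μν} B_{aν}`. -/
def Bup (a : Fin r) (μ : Idx) : Jet r := ∑ ν : Idx, η μ ν • Bdn f a ν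

/-- The Wick submonomial `C_{aμ} := f_{abc}(v_b^ν F_{cνμ} - u_b (d_μ ũ_c))`. -/
def Cdn (a : Fin r) (μ : Idx) : Jet r :=
  ∑ b : Fin r, ∑ c : Fin r, ((f a b c : ℝ) : ℂ) •
    (∑ ν : Idx, vUp b ν * Fdd D c ν μ - uGen b 0 * D.d μ (utGen c 0))

/-- `C_a^μ := η^{μν} C_{aν}`. -/
def Cup (a : Fin r) (μ : Idx) : Jet r := ∑ ν : Idx, η μ ν • Cdn D f a ν

/-- The Wick submonomial `D_a := f_{abc} v_b^μ (d_μ ũ_c)`. -/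
def Dgh (a : Fin r) : Jet r :=
  ∑ b : Fin r, ∑ c : Fin r, ((f a b c : ℝ) : ℂ) •
    ∑ μ : Idx, vUp b μ * D.d μ (utGen c 0)

/-- The Wick submonomial `E_{aμν} := f_{abc} v_{bμ} v_{cν}`. -/
def Edd (a : Fin r) (μ ν : Idx) : Jet r :=
  ∑ b : Fin r, ∑ c : Fin r, ((f a b c : ℝ) : ℂ) • (vGen b μ 0 * vGen c ν 0)

/-- `E_a^{μν} := η^{μρ} η^{νσ} E_{aρσ}`. -/
def Euu (a : Fin r) (μ ν : Idx) : Jet r :=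
  ∑ ρ : Idx, ∑ s : Idx, (η μ ρ * η ν s) • Edd f a ρ s

/-- The Wick submonomial `C_{aμν} := -f_{abc} u_b F_{cμν}`. -/
def Cdd (a : Fin r) (μ ν : Idx) : Jet r :=
  ∑ b : Fin r, ∑ c : Fin r, (-((f a b c : ℝ) : ℂ)) • (uGen b 0 * Fdd D c μ ν)

/-- `C_a^{μν} := η^{μρ} η^{νσ} C_{aρσ}`. -/
def Cuu (a : Fin r) (μ ν : Idx) : Jet r :=
  ∑ ρ : Idx, ∑ s : Idx, (η μ ρ * η ν s) • Cdd D f a ρ s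

/-- The Wick submonomial `B_a := ½ f_{abc} u_b u_c`. -/
def Bgh (a : Fin r) : Jet r :=
  (2⁻¹ : ℂ) • ∑ b : Fin r, ∑ c : Fin r, ((f a b c : ℝ) : ℂ) • (uGen b 0 * uGen c 0)

open Finset

lemma η_of_ne {μ ν : Idx} (h : μ ≠ ν) : η μ ν = 0 := if_neg h

lemma η_mul_self (μ : Idx) : η μ μ * η μ μ = 1 := by
  fin_cases μ <;> norm_num [η]

lemma sum_η_smul {M : Type*} [AddCommMonoid M] [Module ℂ M] (μ : Idx) (x : Idx → M) :
    ∑ ρ, η μ ρ • x ρ = η μ μ • x μ :=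
  Fintype.sum_eq_single μ fun ρ hρ => by rw [η_of_ne hρ.symm, zero_smul]

lemma sum_sum_η_mul_η_smul {M : Type*} [AddCommMonoid M] [Module ℂ M] (μ ν : Idx)
    (x : Idx → Idx → M) :
    ∑ ρ, ∑ s, (η μ ρ * η ν s) • x ρ s = (η μ μ * η ν ν) • x μ ν := by
  simp only [mul_smul, ← smul_sum, sum_η_smul]

section JetAlgebra

variable {r : ℕ}

lemma vGen_mul_comm (a : Fin r) (μ : Idx) (M : Multiset Idx) (x : Jet r) :
    vGen a μ M * x = x * vGen a μ M :=
  Algebra.commutes (MvPolynomial.X ⟨a, μ, M⟩ : MvPolynomial (EvenGen r) ℂ) x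

lemma one_tmul_ι_mul_anticomm (m n : OddGen r →₀ ℂ) :
    (1 ⊗ₜ[ℂ] ExteriorAlgebra.ι ℂ m : Jet r) * (1 ⊗ₜ[ℂ] ExteriorAlgebra.ι ℂ n)
      = -((1 ⊗ₜ[ℂ] ExteriorAlgebra.ι ℂ n) * (1 ⊗ₜ[ℂ] ExteriorAlgebra.ι ℂ m)) := by
  rw [Algebra.TensorProduct.tmul_mul_tmul, Algebra.TensorProduct.tmul_mul_tmul, one_mul,
    ← TensorProduct.tmul_neg, eq_neg_of_add_eq_zero_left (ExteriorAlgebra.ι_add_mul_swap m n)]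

lemma uGen_mul_uGen (a b : Fin r) (M N : Multiset Idx) :
    uGen a M * uGen b N = -(uGen b N * uGen a M) :=
  one_tmul_ι_mul_anticomm _ _

lemma utGen_mul_uGen (a b : Fin r) (M N : Multiset Idx) :
    utGen a M * uGen b N = -(uGen b N * utGen a M) :=
  one_tmul_ι_mul_anticomm _ _

/- Elaboration gives `-x : Jet r` the instance `TensorProduct.neg`, which agrees with the ring
negation only after unfolding past instance transparency, so `neg_mul`, `mul_neg` and `neg_smul`
do not rewrite in `Jet r`; these restatements do. -/

lemma Jet.neg_mul (x y : Jet r) : -x * y = -(x * y) := _root_.neg_mul x y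

lemma Jet.mul_neg (x y : Jet r) : x * -y = -(x * y) := _root_.mul_neg x y

lemma Jet.neg_smul (c : ℂ) (x : Jet r) : (-c) • x = -(c • x) := _root_.neg_smul c x

end JetAlgebra

section Contractions

variable {r : ℕ} (D : DerData r) (f : Fin r → Fin r → Fin r → ℝ)

lemma dUp_utGen (μ : Idx) (b : Fin r) : dUp D μ (utGen b 0) = η μ μ • utGen b (μ ::ₘ 0) := by
  simp only [dUp, D.d_ut, sum_η_smul]

lemma Fuu_eq (a : Fin r) (μ ν : Idx) :
    Fuu D a μ ν = (η μ μ * η ν ν) • (vGen a ν (μ ::ₘ 0) - vGen a μ (ν ::ₘ 0)) := by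
  simp only [Fuu, dUp, vUp, map_smul, D.d_v, sum_η_smul]
  rw [smul_smul, smul_smul, mul_comm (η ν ν), smul_sub]

lemma Fuu_mul_comm (a : Fin r) (μ ν : Idx) (x : Jet r) : Fuu D a μ ν * x = x * Fuu D a μ ν := by
  rw [Fuu_eq, smul_mul_assoc, mul_smul_comm, sub_mul, mul_sub, vGen_mul_comm, vGen_mul_comm]

lemma Fuu_swap (a : Fin r) (μ ν : Idx) : Fuu D a ν μ = -Fuu D a μ ν :=
  (neg_sub _ _).symm

lemma Cuu_eq (c : Fin r) (μ ν : Idx) :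
    Cuu D f c μ ν = ∑ d, ∑ e, (-(f c d e : ℂ)) • (uGen d 0 * Fuu D e μ ν) := by
  simp only [Cuu, Cdd, Fdd, sum_sum_η_mul_η_smul]
  simp only [mul_smul_comm, smul_sum, smul_smul]
  refine sum_congr rfl fun d _ => sum_congr rfl fun e _ => ?_
  congr 1
  linear_combination (-(f c d e : ℂ)) * (η ν ν * η ν ν * η_mul_self μ + η_mul_self ν)

lemma Cup_eq (c : Fin r) (μ : Idx) :
    Cup D f c μ = ∑ d, ∑ e, (f c d e : ℂ) •
      (∑ ν, vGen d ν 0 * Fuu D e ν μ - η μ μ • (uGen d 0 * utGen e (μ ::ₘ 0))) := by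
  simp only [Cup, Cdn, Fdd, vUp, D.d_ut, sum_η_smul, sum_sum_η_mul_η_smul]
  simp only [smul_mul_assoc, mul_smul_comm, smul_smul, smul_sum, smul_sub]
  refine sum_congr rfl fun d _ => sum_congr rfl fun e _ => ?_
  congr 1
  · refine sum_congr rfl fun ν _ => ?_
    congr 1
    linear_combination (f c d e : ℂ) * (η μ μ * η μ μ * η_mul_self ν + η_mul_self μ)
  · rw [mul_comm]

end Contractions

section NormalForm

variable {r : ℕ} (D : DerData r) (f : Fin r → Fin r → Fin r → ℝ)

def uvF (μ : Idx) (x y z : Fin r) : Jet r := ∑ ν, uGen x 0 * (vGen y ν 0 * Fuu D z μ ν)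

def uuDut (μ : Idx) (x y z : Fin r) : Jet r := uGen x 0 * (uGen y 0 * utGen z (μ ::ₘ 0))

lemma uuDut_swap (μ : Idx) (x y z : Fin r) : uuDut μ y x z = -uuDut μ x y z := by
  simp only [uuDut, ← mul_assoc, uGen_mul_uGen y x, Jet.neg_mul]

lemma utGen_mul_uGen_mul_uGen (μ : Idx) (x y z : Fin r) :
    utGen z (μ ::ₘ 0) * (uGen x 0 * uGen y 0) = uuDut μ x y z := by
  rw [← mul_assoc, utGen_mul_uGen, Jet.neg_mul, mul_assoc, utGen_mul_uGen, Jet.mul_neg, neg_neg,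
    uuDut]

lemma neg_sum_vGen_mul_Cuu (μ : Idx) (b c : Fin r) :
    -∑ ν, vGen b ν 0 * Cuu D f c μ ν = ∑ d, ∑ e, (f c d e : ℂ) • uvF D μ d b e := by
  simp only [Cuu_eq, mul_sum, mul_smul_comm, Jet.neg_smul, Jet.mul_neg, sum_neg_distrib, neg_neg,
    uvF, smul_sum]
  rw [sum_comm]
  refine sum_congr rfl fun d _ => ?_
  rw [sum_comm]
  refine sum_congr rfl fun e _ => sum_congr rfl fun ν _ => ?_
  rw [← mul_assoc, vGen_mul_comm, mul_assoc]

lemma uGen_mul_Cup (μ : Idx) (b c : Fin r) :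
    uGen b 0 * Cup D f c μ
      = ∑ d, ∑ e, (f c d e : ℂ) • (-uvF D μ b d e - η μ μ • uuDut μ b d e) := by
  simp only [Cup_eq, mul_sum, mul_smul_comm, mul_sub, uvF, uuDut, Fuu_swap D _ _ μ, Jet.mul_neg,
    sum_neg_distrib, neg_neg]

lemma sum_Fuu_mul_Bdn (μ : Idx) (b c : Fin r) :
    ∑ ν, Fuu D b μ ν * Bdn f c ν = ∑ d, ∑ e, (f c d e : ℂ) • -uvF D μ d e b := by
  simp only [Bdn, mul_sum, mul_smul_comm, Jet.neg_smul, Jet.mul_neg, sum_neg_distrib, smul_neg,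
    uvF, smul_sum]
  rw [sum_comm]
  refine congrArg _ (sum_congr rfl fun d _ => ?_)
  rw [sum_comm]
  refine sum_congr rfl fun e _ => sum_congr rfl fun ν _ => ?_
  rw [Fuu_mul_comm, mul_assoc]

lemma dUp_utGen_mul_Bgh (μ : Idx) (b c : Fin r) :
    dUp D μ (utGen b 0) * Bgh f c
      = ∑ d, ∑ e, (f c d e : ℂ) • (2⁻¹ * η μ μ) • uuDut μ d e b := by
  simp only [dUp_utGen, Bgh, smul_mul_assoc, mul_smul_comm, mul_sum, smul_sum,
    utGen_mul_uGen_mul_uGen, smul_smul]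
  refine sum_congr rfl fun d _ => sum_congr rfl fun e _ => ?_
  congr 1
  ring

lemma anomaly_summand_eq (μ : Idx) (b c : Fin r) :
    -∑ ν, vGen b ν 0 * Cuu D f c μ ν + uGen b 0 * Cup D f c μ
        + ∑ ν, Fuu D b μ ν * Bdn f c ν - dUp D μ (utGen b 0) * Bgh f c
      = ∑ d, ∑ e, (f c d e : ℂ) • (uvF D μ d b e - uvF D μ b d e - uvF D μ d e b
          - η μ μ • uuDut μ b d e - (2⁻¹ * η μ μ) • uuDut μ d e b) := by
  simp only [neg_sum_vGen_mul_Cuu, uGen_mul_Cup, sum_Fuu_mul_Bdn, dUp_utGen_mul_Bgh,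
    ← sum_add_distrib, ← sum_sub_distrib, ← smul_add, ← smul_sub]
  congr! 3
  abel

end NormalForm

section Relabel

variable {ι R M : Type*} [Fintype ι] [AddCommGroup M]

lemma sum_smul_relabel [CommRing R] [Module R M] (k : ι → ι → ι → R) (p q : ι → ι → ι → M)
    (α β : R) :
    ∑ x, ∑ y, ∑ z, k x y z • (p y x z - p x y z - p y z x - α • q x y z - β • q y z x)
      = ∑ x, ∑ y, ∑ z, (k y x z - k x y z - k z x y) • p x y z
        - ∑ x, ∑ y, ∑ z, (k x y z * α + k z x y * β) • q x y z := by
  have swap : ∑ x, ∑ y, ∑ z, k x y z • p y x z = ∑ x, ∑ y, ∑ z, k y x z • p x y z := sum_comm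
  have rotate (F : ι → ι → ι → M) : ∑ x, ∑ y, ∑ z, F x y z = ∑ x, ∑ y, ∑ z, F z x y :=
    sum_comm.trans (sum_congr rfl fun _ _ => sum_comm)
  simp only [smul_sub, sub_smul, add_smul, mul_smul, sum_sub_distrib, sum_add_distrib]
  rw [swap, rotate fun x y z => k x y z • p y z x, rotate fun x y z => k x y z • β • q y z x]
  abel

lemma sum_add_swap_smul_eq_zero [Semiring R] [Module R M] (c : ι → ι → ι → R)
    (q : ι → ι → ι → M) (hq : ∀ x y z, q y x z = -q x y z) :
    ∑ x, ∑ y, ∑ z, (c x y z + c y x z) • q x y z = 0 := by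
  have swap : ∑ x, ∑ y, ∑ z, c y x z • q x y z = -∑ x, ∑ y, ∑ z, c x y z • q x y z := by
    rw [sum_comm]
    simp only [← sum_neg_distrib, ← smul_neg, ← hq]
  rw [← add_neg_cancel (∑ x, ∑ y, ∑ z, c x y z • q x y z), ← swap]
  simp only [add_smul, sum_add_distrib]

end Relabel

section StructureConstants

variable {r : ℕ} (f : Fin r → Fin r → Fin r → ℝ)

def ff (a x y z : Fin r) : ℝ := ∑ c, f a x c * f c y z

lemma ff_jacobi (hf₁ : ∀ a b c, f a b c = - f b a c) (hf₂ : ∀ a b c, f a b c = - f a c b)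
    (hJac : ∀ a b c d : Fin r,
      (∑ e : Fin r, (f e a b * f e c d + f e b c * f e a d + f e c a * f e b d)) = 0)
    (a x y z : Fin r) :
    ff f a z x y = ff f a y x z - ff f a x y z := by
  have hcyc (p q s : Fin r) : f p q s = f s p q := by rw [hf₂, ← hf₁]
  rw [eq_sub_iff_add_eq, eq_comm, ← sub_eq_zero, ← hJac a y x z]
  simp only [ff, ← sum_add_distrib, ← sum_sub_distrib]
  refine sum_congr rfl fun c _ => ?_
  rw [hcyc a y c, hcyc a x c, hcyc a z c, hf₂ c y x, hf₂ c x a]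
  ring

lemma sum_smul_sum_smul_eq_sum_ff {M : Type*} [AddCommMonoid M] [Module ℂ M] (a : Fin r)
    (g : Fin r → Fin r → Fin r → M) :
    ∑ b, ∑ c, (f a b c : ℂ) • ∑ d, ∑ e, (f c d e : ℂ) • g b d e
      = ∑ x, ∑ y, ∑ z, (ff f a x y z : ℂ) • g x y z := by
  refine sum_congr rfl fun b _ => ?_
  simp only [smul_sum, smul_smul, ff, Complex.ofReal_sum, Complex.ofReal_mul, sum_smul]
  rw [sum_comm]
  refine sum_congr rfl fun d _ => ?_
  rw [sum_comm]

end StructureConstants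

theorem anomaly_CmuT_vanishes_general
    (r : ℕ) (f : Fin r → Fin r → Fin r → ℝ)
    (hf₁ : ∀ a b c, f a b c = - f b a c) (hf₂ : ∀ a b c, f a b c = - f a c b)
    (hJac : ∀ a b c d : Fin r,
      (∑ e : Fin r, (f e a b * f e c d + f e b c * f e a d + f e c a * f e b d)) = 0)
    (D : DerData r) :
    ∀ (a : Fin r) (μ : Idx),
      (∑ b : Fin r, ∑ c : Fin r, ((f a b c : ℝ) : ℂ) •
          (- ∑ ν : Idx, vGen b ν 0 * Cuu D f c μ ν
            + uGen b 0 * Cup D f c μ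
            + ∑ ν : Idx, Fuu D b μ ν * Bdn f c ν
            - dUp D μ (utGen b 0) * Bgh f c)) = 0 := by
  intro a μ
  simp only [anomaly_summand_eq]
  rw [sum_smul_sum_smul_eq_sum_ff, sum_smul_relabel]
  have huvF (x y z : Fin r) : (ff f a y x z : ℂ) - ff f a x y z - ff f a z x y = 0 := by
    rw [ff_jacobi f hf₁ hf₂ hJac a x y z]; push_cast; ring
  have huuDut (x y z : Fin r) : (ff f a x y z : ℂ) * η μ μ + ff f a z x y * (2⁻¹ * η μ μ)
      = 2⁻¹ * η μ μ * ff f a x y z + 2⁻¹ * η μ μ * ff f a y x z := by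
    rw [ff_jacobi f hf₁ hf₂ hJac a x y z]; push_cast; ring
  simp only [huvF, zero_smul, sum_const_zero, huuDut, zero_sub, neg_eq_zero]
  exact sum_add_swap_smul_eq_zero _ _ (uuDut_swap μ)

/-- If the structure constants satisfy the Jacobi identity, then for every
`a` and `μ` the anomaly
`𝒜(C_a^μ,T) := f_{abc}(- v_{bν} C_c^{μν} + u_b C_c^μ + F_b^{μν} B_{cν} - (d^μ ũ_b) B_c)`
vanishes in the jet algebra `𝒜`. -/
theorem anomaly_CmuT_vanishes
    (r : ℕ) (hr : 1 ≤ r) (f : Fin r → Fin r → Fin r → ℝ)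
    (hf₁ : ∀ a b c, f a b c = - f b a c) (hf₂ : ∀ a b c, f a b c = - f a c b)
    (hJac : ∀ a b c d : Fin r,
      (∑ e : Fin r, (f e a b * f e c d + f e b c * f e a d + f e c a * f e b d)) = 0)
    (D : DerData r) :
    ∀ (a : Fin r) (μ : Idx),
      (∑ b : Fin r, ∑ c : Fin r, ((f a b c : ℝ) : ℂ) •
          (- ∑ ν : Idx, vGen b ν 0 * Cuu D f c μ ν
            + uGen b 0 * Cup D f c μ
            + ∑ ν : Idx, Fuu D b μ ν * Bdn f c ν
            - dUp D μ (utGen b 0) * Bgh f c)) = 0 :=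
  anomaly_CmuT_vanishes_general r f hf₁ hf₂ hJac D
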